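/- Let a feedforward network with arbitrary activations be given, with a weight configuration W = (W_1, …, W_L) and updates ΔW = (ΔW_1, …, ΔW_L). Let S ⊆ ℝ^{d_0} be a set of inputs. If for every layer l ∈ {1, …, L} and every x ∈ S the update annihilates the layer features, i.e. h_{l−1}(W, x) · ΔW_l = 0 (the zero row vector in ℝ^{d_l}), then for every layer l and every x ∈ S one has h_l(W + ΔW, x) = h_l(W, x), where W + ΔW denotes layerwise addition; in particular the network outputs agree: N(W + ΔW, x) = N(W, x) for all x ∈ S. -/

import Mathlib

/-- The feature map of a feedforward network with arbitrary activations: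
`feature d σ W x l` is the feature of the `l`-th layer (`l = 0` gives the input `x`),
where `h_{l+1} = σ_l (h_l ⬝ W_l)` (row-vector–matrix product). -/
def feature (d : ℕ → ℕ)
    (σ : ∀ l : ℕ, (Fin (d (l + 1)) → ℝ) → (Fin (d (l + 1)) → ℝ))
    (W : ∀ l : ℕ, Matrix (Fin (d l)) (Fin (d (l + 1))) ℝ)
    (x : Fin (d 0) → ℝ) : (l : ℕ) → (Fin (d l) → ℝ)
  | 0 => x
  | l + 1 => σ l (Matrix.vecMul (feature d σ W x l) (W l))

theorem feature_add_eq_of_vecMul_eq_zero {d : ℕ → ℕ}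
    {σ : ∀ l : ℕ, (Fin (d (l + 1)) → ℝ) → (Fin (d (l + 1)) → ℝ)}
    {W ΔW : ∀ l : ℕ, Matrix (Fin (d l)) (Fin (d (l + 1))) ℝ} {x : Fin (d 0) → ℝ} {n : ℕ}
    (hnull : ∀ l < n, Matrix.vecMul (feature d σ W x l) (ΔW l) = 0) :
    ∀ l ≤ n, feature d σ (fun l => W l + ΔW l) x l = feature d σ W x l := by
  intro l hl
  induction l with
  | zero => rfl
  | succ l ih =>
    rw [feature, feature, ih (by omega), Matrix.vecMul_add, hnull l (by omega), add_zero]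

theorem statement0 (L : ℕ) (d : ℕ → ℕ)
    (σ : ∀ l : ℕ, (Fin (d (l + 1)) → ℝ) → (Fin (d (l + 1)) → ℝ))
    (W ΔW : ∀ l : ℕ, Matrix (Fin (d l)) (Fin (d (l + 1))) ℝ)
    (S : Set (Fin (d 0) → ℝ))
    (hnull : ∀ l < L, ∀ x ∈ S, Matrix.vecMul (feature d σ W x l) (ΔW l) = 0) :
    (∀ l ≤ L, ∀ x ∈ S,
        feature d σ (fun l => W l + ΔW l) x l = feature d σ W x l) ∧
    (∀ x ∈ S, feature d σ (fun l => W l + ΔW l) x L = feature d σ W x L) := by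
  have hfeature : ∀ l ≤ L, ∀ x ∈ S,
      feature d σ (fun l => W l + ΔW l) x l = feature d σ W x l := fun l hl x hx =>
    feature_add_eq_of_vecMul_eq_zero (fun k hk => hnull k hk x hx) l hl
  exact ⟨hfeature, fun x hx => hfeature L le_rfl x hx⟩
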